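/- arXiv:2212.14411 — 3 statements merged into one kernel-verified Lean document; each statement's English description precedes it below -/
import Mathlib

section
/- Let Z be a standard normal random variable and define h₁(a) = E[exp(−(a − Z²/2)_+)] for a ∈ ℝ. Then h₁(a) = 2·e^{−a}·√(a/π) + 2·(1 − Φ(√(2a))) for all a > 0. -/
open MeasureTheory ProbabilityTheory Real

/-- The standard normal cumulative distribution function. -/
noncomputable def stdPhi (x : ℝ) : ℝ := ((gaussianReal 0 1) (Set.Iic x)).toReal

/-- `h₁(a) = E[exp(−(a − Z²/2)_+)]` for `Z` standard normal. -/
noncomputable def h1 (a : ℝ) : ℝ :=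
  ∫ z, Real.exp (-(max (a - z^2/2) 0)) ∂(gaussianReal 0 1)

/-!
On `|z| ≤ √(2a)` the integrand is `e^{-a} e^{z²/2}`, which cancels the Gaussian density down to the
constant `e^{-a}/√(2π)`; integrating it over an interval of length `2√(2a)` gives `2e^{-a}√(a/π)`.
Outside that interval the integrand is `1`, so that part is the Gaussian mass of the two tails,
which are equal by symmetry, each being `1 - Φ(√(2a))`.
-/

open Set
open scoped NNReal

lemma compl_Icc_eq_Iio_union_Ioi {α : Type*} [LinearOrder α] (a b : α) :
    (Icc a b)ᶜ = Iio a ∪ Ioi b := by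
  ext x
  simp only [mem_compl_iff, mem_Icc, not_and_or, not_le, mem_union, mem_Iio, mem_Ioi]

lemma setIntegral_gaussianReal_eq_setIntegral_smul {E : Type*} [NormedAddCommGroup E]
    [NormedSpace ℝ E] {μ : ℝ} {v : ℝ≥0} (hv : v ≠ 0) (f : ℝ → E) {s : Set ℝ}
    (hs : MeasurableSet s) :
    ∫ x in s, f x ∂gaussianReal μ v = ∫ x in s, gaussianPDFReal μ v x • f x := by
  rw [gaussianReal_of_var_ne_zero μ hv, setIntegral_withDensity_eq_setIntegral_toReal_smul
    (measurable_gaussianPDF μ v) (ae_of_all _ fun _ ↦ gaussianPDF_lt_top) f hs]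
  simp only [toReal_gaussianPDF]

lemma gaussianPDFReal_zero_one_mul_exp_sq_half (x : ℝ) :
    gaussianPDFReal 0 1 x * exp (x ^ 2 / 2) = (√(2 * π))⁻¹ := by
  simp [gaussianPDFReal, mul_assoc, ← exp_add, neg_div]

lemma setIntegral_exp_sq_half_gaussianReal_Icc {a b : ℝ} (hab : a ≤ b) :
    ∫ x in Icc a b, exp (x ^ 2 / 2) ∂gaussianReal 0 1 = (b - a) / √(2 * π) := by
  rw [setIntegral_gaussianReal_eq_setIntegral_smul one_ne_zero _ measurableSet_Icc]
  simp only [smul_eq_mul, gaussianPDFReal_zero_one_mul_exp_sq_half, setIntegral_const,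
    volume_real_Icc_of_le hab]
  ring

lemma gaussianReal_real_Iio_neg (v : ℝ≥0) (x : ℝ) :
    (gaussianReal 0 v).real (Iio (-x)) = (gaussianReal 0 v).real (Ioi x) := by
  conv_lhs => rw [← neg_zero, ← gaussianReal_map_neg]
  rw [map_measureReal_apply measurable_neg measurableSet_Iio, neg_preimage, neg_Iio, neg_neg]

lemma gaussianReal_real_Ioi_eq_one_sub_stdPhi (x : ℝ) :
    (gaussianReal 0 1).real (Ioi x) = 1 - stdPhi x := by
  rw [← compl_Iic, probReal_compl_eq_one_sub measurableSet_Iic, stdPhi, measureReal_def]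

lemma gaussianReal_real_compl_Icc_neg {x : ℝ} (hx : 0 ≤ x) :
    (gaussianReal 0 1).real (Icc (-x) x)ᶜ = 2 * (1 - stdPhi x) := by
  have hdisj : Disjoint (Iio (-x)) (Ioi x) :=
    (Iic_disjoint_Ioi (neg_le_self hx)).mono_left Iio_subset_Iic_self
  rw [compl_Icc_eq_Iio_union_Ioi, measureReal_union hdisj measurableSet_Ioi,
    gaussianReal_real_Iio_neg, gaussianReal_real_Ioi_eq_one_sub_stdPhi]
  ring

/-- For all `a > 0`, `h₁(a) = 2·e^{−a}·√(a/π) + 2·(1 − Φ(√(2a)))`. -/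
theorem h1_eq (a : ℝ) (ha : 0 < a) :
    h1 a = 2 * Real.exp (-a) * Real.sqrt (a/π) + 2 * (1 - stdPhi (Real.sqrt (2*a))) := by
  set s := √(2 * a)
  have hs : 0 ≤ s := sqrt_nonneg _
  have hs_sq : s ^ 2 = 2 * a := sq_sqrt (by positivity)
  set f : ℝ → ℝ := fun z ↦ exp (-(max (a - z ^ 2 / 2) 0))
  have inside : EqOn f (fun z ↦ exp (-a) * exp (z ^ 2 / 2)) (Icc (-s) s) := fun z hz ↦ by
    have : z ^ 2 ≤ s ^ 2 := sq_le_sq' hz.1 hz.2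
    simp only [f, max_eq_left (by linarith : 0 ≤ a - z ^ 2 / 2), ← exp_add]
    ring_nf
  have outside : EqOn f (fun _ ↦ 1) (Icc (-s) s)ᶜ := fun z hz ↦ by
    have : s ^ 2 < z ^ 2 := by
      rw [compl_Icc_eq_Iio_union_Ioi] at hz
      rcases hz with hz | hz
      · nlinarith [mem_Iio.mp hz]
      · nlinarith [mem_Ioi.mp hz]
    simp only [f, max_eq_right (by linarith : a - z ^ 2 / 2 ≤ 0), neg_zero, exp_zero]
  have hf : Integrable f (gaussianReal 0 1) :=
    Integrable.of_bound (by fun_prop) 1 (ae_of_all _ fun z ↦ by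
      rw [norm_of_nonneg (exp_nonneg _), exp_le_one_iff, neg_nonpos]
      exact le_max_right _ _)
  have hsqrt : s / √(2 * π) = √(a / π) := by
    rw [← sqrt_div (by positivity), mul_div_mul_left a π two_ne_zero]
  rw [h1, ← integral_add_compl measurableSet_Icc hf,
    setIntegral_congr_fun measurableSet_Icc inside,
    setIntegral_congr_fun measurableSet_Icc.compl outside, integral_const_mul,
    setIntegral_exp_sq_half_gaussianReal_Icc (neg_le_self hs), setIntegral_const,
    gaussianReal_real_compl_Icc_neg hs, ← hsqrt]
  simp only [smul_eq_mul]
  ring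
end

section
/- Let (X_s)_{s≥1} be adapted to a filtration with ψ_s = E[X_s | F_{s−1}], write X_s = ψ + X⁰_s + (ψ_s − ψ), S_t = Σ_{s≤t} X_s, S̆_t = ψt + Σ_{s≤t} X⁰_s, and Y_t = (1/2)·(S_t²/t − log t). Then for all t ≥ 1, Y_t = Σ_{s=0}^{t−1} (s/(s+1))·(ψ̆_{0,s}·X̆_{s+1} − (1/2)·ψ̆_{0,s}²) + (1/2)·(Σ_{s=1}^t X̆_s²/s − log t) + (S_t² − S̆_t²)/(2t), where X̆_s = ψ + X⁰_s, ψ̆_{0,0} = 0 and ψ̆_{0,s} = S̆_s/s for s ≥ 1. -/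
open Finset

lemma rmlSPRT_aux (Xb : ℕ → ℝ) :
    ∀ t : ℕ,
      (1/2) * (∑ s ∈ Finset.Icc 1 t, Xb s)^2 / (t : ℝ) =
      (∑ s ∈ Finset.range t,
        ((s : ℝ)/((s : ℝ)+1)) *
          ((if s = 0 then 0 else (∑ u ∈ Finset.Icc 1 s, Xb u) / (s : ℝ)) * Xb (s+1)
            - (1/2) * (if s = 0 then 0 else (∑ u ∈ Finset.Icc 1 s, Xb u) / (s : ℝ))^2))
      + (1/2) * (∑ s ∈ Finset.Icc 1 t, (Xb s)^2 / (s : ℝ)) := by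
  intro t
  induction t with
  | zero => simp
  | succ n ih =>
    rw [Finset.sum_range_succ, Finset.sum_Icc_succ_top (by omega : 1 ≤ n + 1),
      Finset.sum_Icc_succ_top (by omega : 1 ≤ n + 1)]
    rcases Nat.eq_zero_or_pos n with hn | hn
    · subst hn; simp
    · have hne : (n : ℝ) ≠ 0 := Nat.cast_ne_zero.mpr (by omega)
      have hne1 : (n : ℝ) + 1 ≠ 0 := by positivity
      simp only [if_neg (by omega : n ≠ 0)]
      push_cast
      have step : (1/2) * ((∑ s ∈ Finset.Icc 1 n, Xb s) + Xb (n+1))^2 / ((n:ℝ)+1)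
          - (1/2) * (∑ s ∈ Finset.Icc 1 n, Xb s)^2 / (n:ℝ)
          = ((n:ℝ)/((n:ℝ)+1)) * (((∑ u ∈ Finset.Icc 1 n, Xb u) / (n:ℝ)) * Xb (n+1)
              - (1/2) * ((∑ u ∈ Finset.Icc 1 n, Xb u) / (n:ℝ))^2)
            + (1/2) * ((Xb (n+1))^2 / ((n:ℝ)+1)) := by
        field_simp
        ring
      linear_combination ih + step


/-- Representation of the running-MLE SPRT statistic as a sum of log-likelihood
ratios with non-anticipating mean estimates plus remainder terms (a purely algebraic
identity). Here `X s = ψ + X⁰_s + (ψ_s − ψ)`, `S_t = Σ_{s≤t} X_s`,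
`X̆_s = ψ + X⁰_s`, `S̆_t = Σ_{s≤t} X̆_s`, `ψ̆_{0,0} = 0`, `ψ̆_{0,s} = S̆_s/s`. -/
theorem rmlSPRT_representation (X0 : ℕ → ℝ) (psi : ℝ) (psiseq : ℕ → ℝ) (X : ℕ → ℝ)
    (hX : ∀ s, X s = psi + X0 s + (psiseq s - psi)) (t : ℕ) (ht : 1 ≤ t) :
    let Xb : ℕ → ℝ := fun s => psi + X0 s
    let S : ℕ → ℝ := fun u => ∑ s ∈ Finset.Icc 1 u, X s
    let Sb : ℕ → ℝ := fun u => ∑ s ∈ Finset.Icc 1 u, Xb s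
    let psib : ℕ → ℝ := fun s => if s = 0 then 0 else Sb s / (s : ℝ)
    (1/2) * ((S t)^2 / (t : ℝ) - Real.log t) =
      (∑ s ∈ Finset.range t,
        ((s : ℝ)/((s : ℝ)+1)) * (psib s * Xb (s+1) - (1/2) * (psib s)^2))
      + (1/2) * ((∑ s ∈ Finset.Icc 1 t, (Xb s)^2 / (s : ℝ)) - Real.log t)
      + ((S t)^2 - (Sb t)^2) / (2 * (t : ℝ)) := by
  intro Xb S Sb psib
  have haux := rmlSPRT_aux Xb t
  have hne : (t : ℝ) ≠ 0 := Nat.cast_ne_zero.mpr (by omega)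
  have hsplit : (1/2) * ((S t)^2 / (t : ℝ) - Real.log t)
      = (1/2) * (Sb t)^2 / (t : ℝ) - (1/2) * Real.log t
        + ((S t)^2 - (Sb t)^2) / (2 * (t : ℝ)) := by
    field_simp
    ring
  rw [hsplit, haux]
  ring
end

section
/- Let (X⁰_t) be a martingale difference sequence with conditional variances v_t satisfying Σ_{t≥1} E[|v_t − 1|]/t < ∞, and let S⁰_t = Σ_{s≤t} X⁰_s. Then for any almost surely finite stopping time τ, E[(S⁰_τ)²/τ] ≤ log E[τ] + O(1); in particular E[(S⁰_τ)²/τ] ≤ E[Σ_{s=1}^τ v_s/s] ≤ E[log τ] + Σ_{s≥1} E[|v_s − 1|]/s + 1. -/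
/-!
Write `S_t = X_1 + ⋯ + X_t` and `v_t = E[X_t² | ℱ_{t-1}]`. For a martingale difference sequence
`E[S_{t+1}² | ℱ_t] = S_t² + v_{t+1}`, so `S_t²/t - Σ_{s ≤ t} v_s/s` is a supermartingale: passing
from `S_t²/t` to `S_t²/(t+1)` only lowers it. Optional stopping at the bounded times `τ ∧ n`,
followed by Fatou's lemma as `n → ∞`, gives `E[S_τ²/τ] ≤ E[Σ_{s ≤ τ} v_s/s]`. Since
`v_s ≤ |v_s - 1| + 1` and `Σ_{s ≤ τ} 1/s ≤ log τ + 1`, the latter is at most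
`E[log τ] + Σ_s E|v_s - 1|/s + 1`, and `E[log τ] ≤ log E[τ]` is Jensen's inequality.
-/

open MeasureTheory Filter Finset Topology

lemma sum_Icc_inv_le_log_add_one (n : ℕ) : ∑ s ∈ Icc 1 n, (s : ℝ)⁻¹ ≤ Real.log n + 1 := by
  have h := harmonic_le_one_add_log n
  rw [harmonic_eq_sum_Icc] at h
  push_cast at h
  linarith

lemma abs_sum_Icc_div_le_sum_abs_sub_one_div_add_log (a : ℕ → ℝ) (n : ℕ) :
    |∑ s ∈ Icc 1 n, a s / s| ≤ ∑ s ∈ Icc 1 n, |a s - 1| / s + (Real.log n + 1) := by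
  calc |∑ s ∈ Icc 1 n, a s / s|
      ≤ ∑ s ∈ Icc 1 n, |a s / s| := abs_sum_le_sum_abs _ _
    _ ≤ ∑ s ∈ Icc 1 n, (|a s - 1| / s + (s : ℝ)⁻¹) := by
        gcongr with s
        rw [abs_div, Nat.abs_cast, ← one_div, ← add_div]
        gcongr
        linarith [abs_sub_abs_le_abs_sub (a s) 1, abs_one (α := ℝ)]
    _ ≤ _ := by
        rw [sum_add_distrib]
        exact add_le_add_right (sum_Icc_inv_le_log_add_one n) _

lemma measurable_apply_index {Ω β : Type*} {m : MeasurableSpace Ω} [MeasurableSpace β]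
    {f : ℕ → Ω → β} (hf : ∀ n, Measurable (f n)) {σ : Ω → ℕ} (hσ : Measurable σ) :
    Measurable fun ω => f (σ ω) ω :=
  (measurable_from_prod_countable_left (f := fun p : Ω × ℕ => f p.2 p.1) hf).comp
    (measurable_id.prodMk hσ)

section

variable {Ω : Type*} {m₀ : MeasurableSpace Ω} {μ : Measure Ω}

lemma MeasureTheory.IsStoppingTime.measurable_of_coe {ℱ : Filtration ℕ m₀} {τ : Ω → ℕ}
    (hτ : IsStoppingTime ℱ fun ω => (τ ω : WithTop ℕ)) : Measurable τ :=
  (measurable_of_countable fun n : WithTop ℕ => n.untopD 0).comp hτ.measurable'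

lemma integral_log_le_log_integral [IsProbabilityMeasure μ] {f : Ω → ℝ}
    (hf1 : ∀ᵐ ω ∂μ, 1 ≤ f ω) (hf : Integrable f μ) :
    Integrable (fun ω => Real.log (f ω)) μ ∧
      ∫ ω, Real.log (f ω) ∂μ ≤ Real.log (∫ ω, f ω ∂μ) := by
  have hlog : Integrable (fun ω => Real.log (f ω)) μ := by
    refine hf.mono'
      (Real.measurable_log.comp_aemeasurable hf.aemeasurable).aestronglyMeasurable ?_
    filter_upwards [hf1] with ω hω
    rw [Real.norm_eq_abs, abs_of_nonneg (Real.log_nonneg hω)]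
    exact Real.log_le_self (by linarith)
  have hIci : Set.Ici (1 : ℝ) ⊆ Set.Ioi 0 := fun x (hx : 1 ≤ x) => by simp; linarith
  refine ⟨hlog, ?_⟩
  exact (strictConcaveOn_log_Ioi.concaveOn.subset hIci (convex_Ici 1)).le_map_integral
    (Real.continuousOn_log.mono fun x hx => (hIci hx).ne') isClosed_Ici hf1 hf hlog

lemma integral_le_of_lintegral_ofReal_le {f : Ω → ℝ} {C : ℝ} (hf0 : 0 ≤ᵐ[μ] f)
    (hf : AEStronglyMeasurable f μ) (hC : 0 ≤ C)
    (h : ∫⁻ ω, ENNReal.ofReal (f ω) ∂μ ≤ ENNReal.ofReal C) :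
    Integrable f μ ∧ ∫ ω, f ω ∂μ ≤ C := by
  refine ⟨⟨hf, (hasFiniteIntegral_iff_ofReal hf0).2 (h.trans_lt ENNReal.ofReal_lt_top)⟩, ?_⟩
  rw [integral_eq_lintegral_of_nonneg_ae hf0 hf]
  exact ENNReal.toReal_le_of_le_ofReal hC h

lemma integral_sum_le_tsum_integral {g : ℕ → Ω → ℝ} (I : Ω → Finset ℕ)
    (hg0 : ∀ s ω, 0 ≤ g s ω) (hg : ∀ s, Integrable (g s) μ)
    (hsum : Summable fun s => ∫ ω, g s ω ∂μ)
    (hm : AEStronglyMeasurable (fun ω => ∑ s ∈ I ω, g s ω) μ) :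
    Integrable (fun ω => ∑ s ∈ I ω, g s ω) μ ∧
      ∫ ω, ∑ s ∈ I ω, g s ω ∂μ ≤ ∑' s, ∫ ω, g s ω ∂μ := by
  have hint0 : ∀ s, 0 ≤ ∫ ω, g s ω ∂μ := fun s => integral_nonneg (hg0 s)
  refine integral_le_of_lintegral_ofReal_le
    (ae_of_all _ fun ω => sum_nonneg fun s _ => hg0 s ω) hm (tsum_nonneg hint0) ?_
  calc ∫⁻ ω, ENNReal.ofReal (∑ s ∈ I ω, g s ω) ∂μ
      = ∫⁻ ω, ∑ s ∈ I ω, ENNReal.ofReal (g s ω) ∂μ :=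
        lintegral_congr fun ω => ENNReal.ofReal_sum_of_nonneg fun s _ => hg0 s ω
    _ ≤ ∫⁻ ω, ∑' s, ENNReal.ofReal (g s ω) ∂μ :=
        lintegral_mono fun ω => ENNReal.sum_le_tsum _
    _ = ∑' s, ENNReal.ofReal (∫ ω, g s ω ∂μ) := by
        rw [lintegral_tsum fun s => (hg s).aemeasurable.ennreal_ofReal]
        exact tsum_congr fun s =>
          (ofReal_integral_eq_lintegral_ofReal (hg s) (ae_of_all _ (hg0 s))).symm
    _ = ENNReal.ofReal (∑' s, ∫ ω, g s ω ∂μ) :=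
        (ENNReal.ofReal_tsum_of_nonneg hint0 hsum).symm

lemma integral_le_of_tendsto_of_nonneg {G : ℕ → Ω → ℝ} {f : Ω → ℝ} {C : ℝ}
    (hG0 : ∀ n ω, 0 ≤ G n ω) (hG : ∀ n, Integrable (G n) μ)
    (hGf : ∀ᵐ ω ∂μ, Tendsto (fun n => G n ω) atTop (𝓝 (f ω)))
    (hC : ∀ n, ∫ ω, G n ω ∂μ ≤ C) :
    Integrable f μ ∧ ∫ ω, f ω ∂μ ≤ C := by
  have hf0 : 0 ≤ᵐ[μ] f := by
    filter_upwards [hGf] with ω hω using ge_of_tendsto' hω fun n => hG0 n ω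
  refine integral_le_of_lintegral_ofReal_le hf0
    (aestronglyMeasurable_of_tendsto_ae _ (fun n => (hG n).1) hGf)
    ((integral_nonneg (hG0 0)).trans (hC 0)) ?_
  calc ∫⁻ ω, ENNReal.ofReal (f ω) ∂μ
      = ∫⁻ ω, liminf (fun n => ENNReal.ofReal (G n ω)) atTop ∂μ := by
        refine lintegral_congr_ae ?_
        filter_upwards [hGf] with ω hω
        exact ((ENNReal.continuous_ofReal.tendsto _).comp hω).liminf_eq.symm
    _ ≤ liminf (fun n => ∫⁻ ω, ENNReal.ofReal (G n ω) ∂μ) atTop :=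
        lintegral_liminf_le' fun n => (hG n).aemeasurable.ennreal_ofReal
    _ ≤ ENNReal.ofReal C := by
        refine (liminf_le_liminf (Eventually.of_forall fun n => ?_)).trans_eq (liminf_const _)
        rw [← ofReal_integral_eq_lintegral_ofReal (hG n) (ae_of_all _ (hG0 n))]
        exact ENNReal.ofReal_le_ofReal (hC n)

lemma condExp_add_sq_ae_eq [IsFiniteMeasure μ] {m : MeasurableSpace Ω} (hm : m ≤ m₀)
    {S Y : Ω → ℝ} (hS : StronglyMeasurable[m] S) (hS2 : MemLp S 2 μ) (hY2 : MemLp Y 2 μ)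
    (hY : μ[Y | m] =ᵐ[μ] 0) :
    μ[fun ω => (S ω + Y ω) ^ 2 | m] =ᵐ[μ] fun ω => S ω ^ 2 + μ[fun ω => Y ω ^ 2 | m] ω := by
  have hSY : Integrable (S * Y) μ := hS2.integrable_mul hY2
  have hsplit : (fun ω => (S ω + Y ω) ^ 2)
      = (fun ω => S ω ^ 2) + ((2 : ℝ) • (S * Y) + fun ω => Y ω ^ 2) := by
    funext ω
    simp only [Pi.add_apply, Pi.smul_apply, Pi.mul_apply, smul_eq_mul]
    ring
  have hS2m : μ[fun ω => S ω ^ 2 | m] = fun ω => S ω ^ 2 :=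
    condExp_of_stronglyMeasurable hm (hS.pow 2) hS2.integrable_sq
  have hcross : μ[S * Y | m] =ᵐ[μ] 0 := by
    filter_upwards [condExp_mul_of_stronglyMeasurable_left hS hSY (hY2.integrable one_le_two), hY]
      with ω h h0
    simp [h, h0]
  rw [hsplit]
  filter_upwards [condExp_add hS2.integrable_sq ((hSY.smul (2 : ℝ)).add hY2.integrable_sq) m,
    condExp_add (hSY.smul (2 : ℝ)) hY2.integrable_sq m, condExp_smul (2 : ℝ) (S * Y) m, hcross]
    with ω h1 h2 h3 h4
  rw [h1, hS2m, Pi.add_apply, h2, Pi.add_apply, h3, Pi.smul_apply, h4]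
  simp

theorem supermartingale_sq_div_sub_sum_condExp_sq_div [IsFiniteMeasure μ]
    {ℱ : Filtration ℕ m₀} {X : ℕ → Ω → ℝ} (hadapt : ∀ s, StronglyMeasurable[ℱ s] (X s))
    (hX2 : ∀ s, MemLp (X s) 2 μ) (hmds : ∀ t, μ[X (t + 1) | ℱ t] =ᵐ[μ] 0) :
    Supermartingale (fun t ω => (∑ s ∈ Icc 1 t, X s ω) ^ 2 / t
      - ∑ s ∈ Icc 1 t, μ[fun ω' => X s ω' ^ 2 | ℱ (s - 1)] ω / s) ℱ μ := by
  set v : ℕ → Ω → ℝ := fun s => μ[fun ω' => X s ω' ^ 2 | ℱ (s - 1)]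
  set S : ℕ → Ω → ℝ := fun t ω => ∑ s ∈ Icc 1 t, X s ω
  set V : ℕ → Ω → ℝ := fun t ω => ∑ s ∈ Icc 1 t, v s ω / s
  have hS : ∀ t, StronglyMeasurable[ℱ t] (S t) := fun t =>
    Finset.stronglyMeasurable_fun_sum _ fun s hs => (hadapt s).mono (ℱ.mono (mem_Icc.1 hs).2)
  have hv : ∀ s t, s ≤ t + 1 → StronglyMeasurable[ℱ t] fun ω => v s ω / s := fun s t hst =>
    Measurable.stronglyMeasurable
      ((stronglyMeasurable_condExp.mono (ℱ.mono (by omega))).measurable.div_const _)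
  have hV : ∀ t, StronglyMeasurable[ℱ t] (V t) := fun t =>
    Finset.stronglyMeasurable_fun_sum _ fun s hs => hv s t (by have := (mem_Icc.1 hs).2; omega)
  have hV_pred : ∀ t, StronglyMeasurable[ℱ t] (V (t + 1)) := fun t =>
    Finset.stronglyMeasurable_fun_sum _ fun s hs => hv s t (mem_Icc.1 hs).2
  have hS2 : ∀ t, MemLp (S t) 2 μ := fun t => memLp_finsetSum _ fun s _ => hX2 s
  have hVint : ∀ t, Integrable (V t) μ := fun t =>
    integrable_finsetSum _ fun s _ => integrable_condExp.div_const _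
  refine supermartingale_nat
    (fun t => (((hS t).measurable.pow_const 2).div_const _).stronglyMeasurable.sub (hV t))
    (fun t => ((hS2 t).integrable_sq.div_const _).sub (hVint t)) fun t => ?_
  have hU : μ[fun ω => S (t + 1) ω ^ 2 / (t + 1 : ℕ) | ℱ t]
      =ᵐ[μ] fun ω => (S t ω ^ 2 + v (t + 1) ω) / (t + 1 : ℕ) := by
    have h : (fun ω => S (t + 1) ω ^ 2 / (t + 1 : ℕ))
        = ((t + 1 : ℕ) : ℝ)⁻¹ • fun ω => (S t ω + X (t + 1) ω) ^ 2 := by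
      funext ω
      rw [Pi.smul_apply, smul_eq_mul, div_eq_inv_mul, show S (t + 1) ω = S t ω + X (t + 1) ω
        from sum_Icc_succ_top (by omega) _]
    rw [h]
    filter_upwards [condExp_smul ((t + 1 : ℕ) : ℝ)⁻¹ (fun ω => (S t ω + X (t + 1) ω) ^ 2) (ℱ t),
      condExp_add_sq_ae_eq (ℱ.le t) (hS t) (hS2 t) (hX2 (t + 1)) (hmds t)] with ω h1 h2
    rw [h1, Pi.smul_apply, h2, smul_eq_mul, div_eq_inv_mul]
    -- `v (t + 1)` conditions on `ℱ (t + 1 - 1)`, which reduces to `ℱ t`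
    rfl
  have hVcond : μ[V (t + 1) | ℱ t] = V (t + 1) :=
    condExp_of_stronglyMeasurable (ℱ.le t) (hV_pred t) (hVint _)
  show μ[(fun ω => S (t + 1) ω ^ 2 / ((t + 1 : ℕ) : ℝ)) - V (t + 1) | ℱ t]
    ≤ᵐ[μ] fun ω => S t ω ^ 2 / t - V t ω
  filter_upwards [condExp_sub ((hS2 (t + 1)).integrable_sq.div_const _) (hVint (t + 1)) (ℱ t), hU]
    with ω h1 h2
  rw [h1, Pi.sub_apply, h2, hVcond, show V (t + 1) ω = V t ω + v (t + 1) ω / (t + 1 : ℕ)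
    from sum_Icc_succ_top (by omega) _]
  -- at `t = 0` the right-hand side is the junk value `S 0 ^ 2 / 0 = 0`, harmless as `S 0 = 0`
  have hshrink : S t ω ^ 2 / ((t + 1 : ℕ) : ℝ) ≤ S t ω ^ 2 / t := by
    rcases Nat.eq_zero_or_pos t with rfl | ht
    · simp [S]
    · exact div_le_div_of_nonneg_left (sq_nonneg _) (by positivity) (by push_cast; linarith)
  rw [add_div]
  linarith

lemma integral_stopped_le_of_supermartingale_sub [IsFiniteMeasure μ] {ℱ : Filtration ℕ m₀}
    {U V : ℕ → Ω → ℝ} (hZ : Supermartingale (fun n ω => U n ω - V n ω) ℱ μ)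
    (hZ0 : ∫ ω, (U 0 ω - V 0 ω) ∂μ ≤ 0) (hU0 : ∀ n ω, 0 ≤ U n ω)
    (hVm : ∀ n, Measurable (V n)) (hV : ∀ n, Integrable (V n) μ)
    (hVmono : ∀ᵐ ω ∂μ, Monotone fun n => V n ω) {τ : Ω → ℕ}
    (hτ : IsStoppingTime ℱ fun ω => (τ ω : WithTop ℕ))
    (hVτ : Integrable (fun ω => V (τ ω) ω) μ) :
    Integrable (fun ω => U (τ ω) ω) μ ∧ ∫ ω, U (τ ω) ω ∂μ ≤ ∫ ω, V (τ ω) ω ∂μ := by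
  have hτn : ∀ n, IsStoppingTime ℱ fun ω => ((min (τ ω) n : ℕ) : WithTop ℕ) := fun n => by
    rw [show (fun ω => ((min (τ ω) n : ℕ) : WithTop ℕ)) = fun ω => min (τ ω : WithTop ℕ) n
      from funext fun ω => WithTop.coe_min _ _]
    exact hτ.min_const n
  have hZτn : ∀ n, Integrable (fun ω => U (min (τ ω) n) ω - V (min (τ ω) n) ω) μ := fun n =>
    integrable_stoppedValue ℕ (hτn n) hZ.integrable (N := n) fun ω =>
      WithTop.coe_le_coe.2 (min_le_right _ _)
  have hZτn_le : ∀ n, ∫ ω, (U (min (τ ω) n) ω - V (min (τ ω) n) ω) ∂μ ≤ 0 := fun n => by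
    have h := hZ.neg.expected_stoppedValue_mono (isStoppingTime_const ℱ 0) (hτn n)
      (fun ω => WithTop.coe_le_coe.2 (Nat.zero_le _)) (N := n)
      (fun ω => WithTop.coe_le_coe.2 (min_le_right _ _))
    simp only [stoppedValue, Pi.neg_apply, integral_neg, neg_le_neg_iff] at h
    exact h.trans hZ0
  have hVτn : ∀ n, Integrable (fun ω => V (min (τ ω) n) ω) μ := fun n => by
    refine ((hV 0).abs.add hVτ.abs).mono' (measurable_apply_index hVm
      (hτ.measurable_of_coe.min measurable_const)).aestronglyMeasurable ?_
    filter_upwards [hVmono] with ω hω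
    have h0 : V 0 ω ≤ V (min (τ ω) n) ω := hω (Nat.zero_le _)
    have hτle : V (min (τ ω) n) ω ≤ V (τ ω) ω := hω (min_le_left _ _)
    rw [Real.norm_eq_abs, abs_le, Pi.add_apply]
    constructor <;> linarith [neg_abs_le (V 0 ω), le_abs_self (V (τ ω) ω), abs_nonneg (V 0 ω),
      abs_nonneg (V (τ ω) ω)]
  refine integral_le_of_tendsto_of_nonneg (G := fun n ω => U (min (τ ω) n) ω)
    (fun n ω => hU0 _ ω) (fun n => ((hZτn n).add (hVτn n)).congr (ae_of_all _ fun ω => by simp))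
    (ae_of_all _ fun ω => ?_) fun n => ?_
  · exact tendsto_atTop_of_eventually_const (i₀ := τ ω) fun n hn => by rw [min_eq_left hn]
  · calc ∫ ω, U (min (τ ω) n) ω ∂μ
        = ∫ ω, (U (min (τ ω) n) ω - V (min (τ ω) n) ω) ∂μ + ∫ ω, V (min (τ ω) n) ω ∂μ := by
          rw [← integral_add (hZτn n) (hVτn n)]
          simp
      _ ≤ 0 + ∫ ω, V (τ ω) ω ∂μ := by
          refine add_le_add (hZτn_le n) (integral_mono_ae (hVτn n) hVτ ?_)
          filter_upwards [hVmono] with ω hω using hω (min_le_left _ _)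
      _ = ∫ ω, V (τ ω) ω ∂μ := zero_add _

lemma integral_sum_Icc_div_le_integral_log_add_tsum [IsProbabilityMeasure μ] {v : ℕ → Ω → ℝ}
    (hvm : ∀ s, Measurable (v s)) (hv : ∀ s, Integrable (v s) μ)
    (hsum : Summable fun s : ℕ => (∫ ω, |v s ω - 1| ∂μ) / s) {σ : Ω → ℕ} (hσ : Measurable σ)
    (hlog : Integrable (fun ω => Real.log (σ ω)) μ) :
    Integrable (fun ω => ∑ s ∈ Icc 1 (σ ω), v s ω / s) μ ∧
      ∫ ω, ∑ s ∈ Icc 1 (σ ω), v s ω / s ∂μ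
        ≤ ∫ ω, Real.log (σ ω) ∂μ + ∑' s : ℕ, (∫ ω, |v s ω - 1| ∂μ) / s + 1 := by
  have hmeas : ∀ g : ℕ → Ω → ℝ, (∀ s, Measurable (g s)) →
      AEStronglyMeasurable (fun ω => ∑ s ∈ Icc 1 (σ ω), g s ω / s) μ := fun g hg =>
    (measurable_apply_index (f := fun n ω => ∑ s ∈ Icc 1 n, g s ω / s)
      (fun n => Finset.measurable_sum _ fun s _ => (hg s).div_const _) hσ).aestronglyMeasurable
  simp_rw [← integral_div] at hsum ⊢
  obtain ⟨hKint, hKle⟩ := integral_sum_le_tsum_integral (g := fun s ω => |v s ω - 1| / s)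
    (fun ω => Icc 1 (σ ω)) (fun s ω => by positivity)
    (fun s => ((hv s).sub (integrable_const 1)).abs.div_const _) hsum
    (hmeas _ fun s => ((hvm s).sub measurable_const).abs)
  have hbound : ∀ ω, |∑ s ∈ Icc 1 (σ ω), v s ω / s|
      ≤ ∑ s ∈ Icc 1 (σ ω), |v s ω - 1| / s + (Real.log (σ ω) + 1) := fun ω =>
    abs_sum_Icc_div_le_sum_abs_sub_one_div_add_log _ _
  have hlog1 : Integrable (fun ω => Real.log (σ ω) + 1) μ := hlog.add (integrable_const 1)
  have hdom : Integrable
      (fun ω => ∑ s ∈ Icc 1 (σ ω), |v s ω - 1| / s + (Real.log (σ ω) + 1)) μ :=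
    hKint.add hlog1
  have hVint := hdom.mono' (hmeas v hvm) (ae_of_all _ hbound)
  refine ⟨hVint, ?_⟩
  calc ∫ ω, ∑ s ∈ Icc 1 (σ ω), v s ω / s ∂μ
      ≤ ∫ ω, (∑ s ∈ Icc 1 (σ ω), |v s ω - 1| / s + (Real.log (σ ω) + 1)) ∂μ :=
        integral_mono hVint hdom fun ω => (le_abs_self _).trans (hbound ω)
    _ = ∫ ω, ∑ s ∈ Icc 1 (σ ω), |v s ω - 1| / s ∂μ + (∫ ω, Real.log (σ ω) ∂μ + 1) := by
        rw [integral_add hKint hlog1, integral_add hlog (integrable_const 1)]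
        simp
    _ ≤ _ := by linarith

end

/-- For a martingale difference sequence `(X⁰_t)` with conditional variances
`v_t = E[(X⁰_t)² | F_{t−1}]` satisfying `Σ_t E[|v_t − 1|]/t < ∞`, and any (a.s. finite,
here `ℕ`-valued) stopping time `τ ≥ 1` with finite mean,
`E[(S⁰_τ)²/τ] ≤ E[Σ_{s=1}^τ v_s/s] ≤ E[log τ] + Σ_{s≥1} E[|v_s − 1|]/s + 1`, and
`E[log τ] ≤ log E[τ]`, so that `E[(S⁰_τ)²/τ] ≤ log E[τ] + O(1)`. -/
theorem expectation_stopped_sq_over_tau {Ω : Type*} {m : MeasurableSpace Ω}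
    (μ : Measure Ω) [IsProbabilityMeasure μ] (ℱ : Filtration ℕ m)
    (X : ℕ → Ω → ℝ)
    (hadapt : ∀ s, StronglyMeasurable[ℱ s] (X s))
    (hint : ∀ s, Integrable (fun ω => (X s ω)^2) μ)
    (hmds : ∀ s, 1 ≤ s → μ[X s | ℱ (s - 1)] =ᵐ[μ] 0)
    (hsum : Summable (fun s : ℕ =>
      (∫ ω, |(μ[fun ω' => (X s ω')^2 | ℱ (s - 1)]) ω - 1| ∂μ) / (s : ℝ)))
    (τ : Ω → ℕ) (hτ : IsStoppingTime ℱ (fun ω => (τ ω : WithTop ℕ))) (hτ1 : ∀ ω, 1 ≤ τ ω)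
    (hτint : Integrable (fun ω => (τ ω : ℝ)) μ) :
    (∫ ω, (∑ s ∈ Finset.Icc 1 (τ ω), X s ω)^2 / (τ ω : ℝ) ∂μ)
      ≤ (∫ ω, ∑ s ∈ Finset.Icc 1 (τ ω),
          (μ[fun ω' => (X s ω')^2 | ℱ (s - 1)]) ω / (s : ℝ) ∂μ) ∧
    (∫ ω, ∑ s ∈ Finset.Icc 1 (τ ω),
        (μ[fun ω' => (X s ω')^2 | ℱ (s - 1)]) ω / (s : ℝ) ∂μ)
      ≤ (∫ ω, Real.log (τ ω : ℝ) ∂μ)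
        + (∑' s : ℕ,
            (∫ ω, |(μ[fun ω' => (X s ω')^2 | ℱ (s - 1)]) ω - 1| ∂μ) / (s : ℝ)) + 1 ∧
    (∫ ω, Real.log (τ ω : ℝ) ∂μ) ≤ Real.log (∫ ω, (τ ω : ℝ) ∂μ) := by
  set v : ℕ → Ω → ℝ := fun s => μ[fun ω' => X s ω' ^ 2 | ℱ (s - 1)]
  have hvm : ∀ s, Measurable (v s) := fun s =>
    stronglyMeasurable_condExp.measurable.mono (ℱ.le _) le_rfl
  have hX2 : ∀ s, MemLp (X s) 2 μ := fun s =>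
    (memLp_two_iff_integrable_sq ((hadapt s).mono (ℱ.le s)).aestronglyMeasurable).2 (hint s)
  obtain ⟨hlog, hjensen⟩ := integral_log_le_log_integral
    (ae_of_all _ fun ω => Nat.one_le_cast.2 (hτ1 ω)) hτint
  obtain ⟨hVτ, hVτ_le⟩ := integral_sum_Icc_div_le_integral_log_add_tsum hvm
    (fun s => integrable_condExp) hsum hτ.measurable_of_coe hlog
  have hVmono : ∀ᵐ ω ∂μ, Monotone fun n => ∑ s ∈ Icc 1 n, v s ω / s := by
    have hv0 : ∀ s, 0 ≤ᵐ[μ] v s := fun s =>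
      condExp_nonneg (ae_of_all _ fun ω => sq_nonneg (X s ω))
    filter_upwards [ae_all_iff.2 hv0] with ω hω
    refine monotone_nat_of_le_succ fun n => ?_
    rw [sum_Icc_succ_top (by omega)]
    exact le_add_of_nonneg_right (div_nonneg (hω _) n.succ.cast_nonneg)
  refine ⟨(integral_stopped_le_of_supermartingale_sub
    (supermartingale_sq_div_sub_sum_condExp_sq_div hadapt hX2 fun t => hmds (t + 1) (by omega))
    (by simp) (fun n ω => by positivity)
    (fun n => Finset.measurable_sum _ fun s _ => (hvm s).div_const _)
    (fun n => integrable_finsetSum _ fun s _ => integrable_condExp.div_const _) hVmono hτ hVτ).2,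
    hVτ_le, hjensen⟩
end
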